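/- Let m ≥ 2 and let v : {0,1}^{4m+3} → ℤ⁴ be the general mapping of Theorem 2 built from a Gray bijection g : {0,1}^{2(m−1)} → Q_{m−1}. If b, b' ∈ {0,1}^{4m+3} are such that v(b) and v(b') are at squared Euclidean distance 4 and their cluster labels coincide, i.e. f(b_{k−1},b_{k−2},b_{k−3}) ⊙ ((−1)^{b_{k−4}},(−1)^{b_{k−5}},(−1)^{b_{k−6}},(−1)^{b_{k−7}}) = f(b'_{k−1},b'_{k−2},b'_{k−3}) ⊙ ((−1)^{b'_{k−4}},(−1)^{b'_{k−5}},(−1)^{b'_{k−6}},(−1)^{b'_{k−7}}) (with k = 4m+3), then b and b' agree in the top 7 bits b_{k−7},…,b_{k−1} and differ in exactly one of the remaining 4(m−1) bits. -/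

import Mathlib

/-- The basic map `f` from bit triples to 4-vectors over ℤ, given by the table. -/
def f : Bool → Bool → Bool → (Fin 4 → ℤ)
  | false, false, false => ![1, 3, 1, 3]
  | false, false, true  => ![1, 3, 1, 1]
  | false, true,  true  => ![1, 3, 3, 1]
  | false, true,  false => ![1, 1, 3, 1]
  | true,  true,  false => ![3, 1, 3, 1]
  | true,  true,  true  => ![3, 1, 1, 1]
  | true,  false, true  => ![3, 1, 1, 3]
  | true,  false, false => ![1, 1, 1, 3]

/-- `(-1)^b` for a bit `b`. -/
def neg1 (b : Bool) : ℤ := if b then -1 else 1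

/-- The flip-parity function `ε(t) = (|t − 1|/2) mod 2`. -/
def eps (t : ℤ) : ℕ := (t - 1).natAbs / 2 % 2

/-- The uniform `4^n`-ary QAM constellation. -/
def Q (n : ℕ) : Set (ℤ × ℤ) :=
  {p | Odd p.1 ∧ Odd p.2 ∧ |p.1| ≤ 2 ^ n - 1 ∧ |p.2| ≤ 2 ^ n - 1}

/-- The `(3×4^m)`-ary cross constellation. -/
def X (m : ℕ) : Set (ℤ × ℤ) :=
  {p | Odd p.1 ∧ Odd p.2 ∧ |p.1| ≤ 2 ^ (m + 1) - 1 ∧ |p.2| ≤ 2 ^ (m + 1) - 1 ∧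
    ¬((2 : ℤ) ^ m < |p.1| ∧ (2 : ℤ) ^ m < |p.2|)}

/-- The cluster labels `(t₁,t₂,t₃,t₄) = f(b_{k−1},b_{k−2},b_{k−3}) ⊙
((−1)^{b_{k−4}},(−1)^{b_{k−5}},(−1)^{b_{k−6}},(−1)^{b_{k−7}})`, where `k = 4m+3`. -/
def tvec (m : ℕ) (b : Fin (4 * m + 3) → Bool) : Fin 4 → ℤ := fun i =>
  f (b ⟨4 * m + 2, by omega⟩) (b ⟨4 * m + 1, by omega⟩) (b ⟨4 * m, by omega⟩) i *
    ![neg1 (b ⟨4 * m - 1, by omega⟩), neg1 (b ⟨4 * m - 2, by omega⟩),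
      neg1 (b ⟨4 * m - 3, by omega⟩), neg1 (b ⟨4 * m - 4, by omega⟩)] i

/-- The general mapping `v` of Theorem 2, built from a within-cluster mapping `g`:
`v(b) = (2^{m−1}t₁ + (−1)^{ε(t₁)}u₁, …, 2^{m−1}t₄ + (−1)^{ε(t₄)}u₄)` with
`(u₁,u₂) = g(b_{(k−7)/2},…,b_{k−8})` and `(u₃,u₄) = g(b₀,…,b_{(k−9)/2})`. -/
def vgen (m : ℕ) (g : (Fin (2 * (m - 1)) → Bool) → ℤ × ℤ)
    (b : Fin (4 * m + 3) → Bool) : Fin 4 → ℤ :=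
  let t := tvec m b
  let u12 := g (fun j => b ⟨2 * (m - 1) + j.val, by have := j.isLt; omega⟩)
  let u34 := g (fun j => b ⟨j.val, by have := j.isLt; omega⟩)
  ![2 ^ (m - 1) * t 0 + (-1) ^ eps (t 0) * u12.1,
    2 ^ (m - 1) * t 1 + (-1) ^ eps (t 1) * u12.2,
    2 ^ (m - 1) * t 2 + (-1) ^ eps (t 2) * u34.1,
    2 ^ (m - 1) * t 3 + (-1) ^ eps (t 3) * u34.2]

/-! Equal cluster labels force equal top bits: `|tᵢ|` recovers the row of `f`, which is
injective, and the sign of `tᵢ` recovers the sign bit. With equal labels the offsets `2^{m−1} tᵢ`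
cancel and the signs square away, so `d²(v b, v b') = d²(u₁₂, u₁₂') + d²(u₃₄, u₃₄')`. Points of
`Q (m − 1)` have odd coordinates, so each summand is `0` or at least `4`: one pair coincides, and
by injectivity of `g` its block of bits agrees, while the other pair is at distance `4`, where the
Gray property of `g` gives exactly one differing bit. -/

theorem f_pos (a₁ a₂ a₃ : Bool) (i : Fin 4) : 0 < f a₁ a₂ a₃ i := by
  revert a₁ a₂ a₃ i; decide

theorem f_injective {a₁ a₂ a₃ c₁ c₂ c₃ : Bool} (h : f a₁ a₂ a₃ = f c₁ c₂ c₃) :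
    a₁ = c₁ ∧ a₂ = c₂ ∧ a₃ = c₃ := by
  revert a₁ a₂ a₃ c₁ c₂ c₃; decide

theorem neg1_injective : Function.Injective neg1 := by decide

theorem abs_neg1 (a : Bool) : |neg1 a| = 1 := by cases a <;> rfl

theorem eq_and_eq_of_mul_eq_mul {p q s s' : ℤ} (hp : 0 < p) (hq : 0 < q)
    (hs : |s| = 1) (hs' : |s'| = 1) (h : p * s = q * s') : p = q ∧ s = s' := by
  have hpq : p = q := by
    simpa [abs_mul, hs, hs', abs_of_pos hp, abs_of_pos hq] using congrArg abs h
  subst hpq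
  exact ⟨rfl, mul_left_cancel₀ hp.ne' h⟩

theorem eq_of_tvec_eq {m : ℕ} {b b' : Fin (4 * m + 3) → Bool} (h : tvec m b = tvec m b')
    (i : Fin (4 * m + 3)) (hi : 4 * (m - 1) ≤ i.val) : b i = b' i := by
  have key (i : Fin 4) := eq_and_eq_of_mul_eq_mul (f_pos _ _ _ i) (f_pos _ _ _ i)
    (by fin_cases i <;> exact abs_neg1 _) (by fin_cases i <;> exact abs_neg1 _) (congrFun h i)
  obtain ⟨e₁, e₂, e₃⟩ := f_injective (funext fun i => (key i).1)
  have e₄ := neg1_injective (key 0).2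
  have e₅ := neg1_injective (key 1).2
  have e₆ := neg1_injective (key 2).2
  have e₇ := neg1_injective (key 3).2
  obtain ⟨i, hi'⟩ := i
  obtain rfl | rfl | rfl | rfl | rfl | rfl | rfl : i = 4 * m - 4 ∨ i = 4 * m - 3 ∨
      i = 4 * m - 2 ∨ i = 4 * m - 1 ∨ i = 4 * m ∨ i = 4 * m + 1 ∨ i = 4 * m + 2 := by
    simp only at hi; omega
  exacts [e₇, e₆, e₅, e₄, e₃, e₂, e₁]

def sqDist (p q : ℤ × ℤ) : ℤ := (p.1 - q.1) ^ 2 + (p.2 - q.2) ^ 2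

theorem sq_sub_neg_one_pow_mul (n : ℕ) (a x y : ℤ) :
    (a + (-1) ^ n * x - (a + (-1) ^ n * y)) ^ 2 = (x - y) ^ 2 := by
  rw [add_sub_add_left_eq_sub, ← mul_sub, mul_pow, ← pow_mul', (even_two_mul n).neg_one_pow,
    one_mul]

theorem eq_zero_or_four_le_sq_of_even {d : ℤ} (hd : Even d) : d = 0 ∨ 4 ≤ d ^ 2 := by
  obtain ⟨k, rfl⟩ := hd
  rcases eq_or_ne k 0 with rfl | hk
  · simp
  · right; nlinarith [Int.one_le_abs hk, sq_abs k]

theorem eq_of_sqDist_nonpos {p q : ℤ × ℤ} (h : sqDist p q ≤ 0) : p = q := by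
  unfold sqDist at h
  have h₁ : p.1 - q.1 = 0 := by nlinarith [sq_nonneg (p.1 - q.1), sq_nonneg (p.2 - q.2)]
  have h₂ : p.2 - q.2 = 0 := by nlinarith [sq_nonneg (p.1 - q.1), sq_nonneg (p.2 - q.2)]
  exact Prod.ext (sub_eq_zero.mp h₁) (sub_eq_zero.mp h₂)

theorem Q.eq_or_four_le_sqDist {n : ℕ} {p q : ℤ × ℤ} (hp : p ∈ Q n) (hq : q ∈ Q n) :
    p = q ∨ 4 ≤ sqDist p q := by
  rcases eq_zero_or_four_le_sq_of_even (hp.1.sub_odd hq.1) with h₁ | h₁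
  · rcases eq_zero_or_four_le_sq_of_even (hp.2.1.sub_odd hq.2.1) with h₂ | h₂
    · exact .inl (Prod.ext (sub_eq_zero.mp h₁) (sub_eq_zero.mp h₂))
    · exact .inr (by unfold sqDist; nlinarith [sq_nonneg (p.1 - q.1)])
  · exact .inr (by unfold sqDist; nlinarith [sq_nonneg (p.2 - q.2)])

theorem Q.sqDist_add_sqDist_eq_four {n : ℕ} {p p' q q' : ℤ × ℤ} (hq : q ∈ Q n) (hq' : q' ∈ Q n)
    (h : sqDist p p' + sqDist q q' = 4) :
    (sqDist p p' = 4 ∧ q = q') ∨ (p = p' ∧ sqDist q q' = 4) := by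
  rcases Q.eq_or_four_le_sqDist hq hq' with rfl | hq4
  · simp_all [sqDist]
  · have := eq_of_sqDist_nonpos (p := p) (q := p') (by linarith)
    subst this; simp_all [sqDist]

theorem card_filter_ne_eq_of_comp_eq {ι κ κ' α : Type*} [Fintype ι] [Fintype κ] [DecidableEq α]
    {p : ι → Prop} [DecidablePred p] {b b' : ι → α} {e₁ : κ → ι} {e₂ : κ' → ι}
    (he₁ : Function.Injective e₁) (hp : ∀ j, p (e₁ j))
    (hcover : ∀ i, p i → (∃ j, e₁ j = i) ∨ ∃ j, e₂ j = i) (h₂ : b ∘ e₂ = b' ∘ e₂) :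
    (Finset.univ.filter fun i => p i ∧ b i ≠ b' i).card =
      (Finset.univ.filter fun j => b (e₁ j) ≠ b' (e₁ j)).card := by
  symm
  refine Finset.card_nbij e₁ (fun j hj => ?_) he₁.injOn fun i hi => ?_
  · simp only [Finset.coe_filter, Finset.mem_univ, true_and, Set.mem_ofPred_eq] at hj ⊢
    exact ⟨hp j, hj⟩
  · simp only [Finset.coe_filter, Finset.mem_univ, true_and, Set.mem_ofPred_eq] at hi
    rcases hcover i hi.1 with ⟨j, rfl⟩ | ⟨j, rfl⟩
    · exact ⟨j, by simpa using hi.2, rfl⟩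
    · exact absurd (congrFun h₂ j) hi.2

section Blocks

variable (m : ℕ)

def lowBlock (j : Fin (2 * (m - 1))) : Fin (4 * m + 3) := ⟨j, by omega⟩

def highBlock (j : Fin (2 * (m - 1))) : Fin (4 * m + 3) := ⟨2 * (m - 1) + j, by omega⟩

theorem lowBlock_injective : Function.Injective (lowBlock m) :=
  fun _ _ h => Fin.ext (by simpa [lowBlock] using h)

theorem highBlock_injective : Function.Injective (highBlock m) :=
  fun _ _ h => Fin.ext (by simpa [highBlock] using h)

theorem lowBlock_or_highBlock (i : Fin (4 * m + 3)) (hi : i.val < 4 * (m - 1)) :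
    (∃ j, lowBlock m j = i) ∨ ∃ j, highBlock m j = i := by
  by_cases h : i.val < 2 * (m - 1)
  · exact .inl ⟨⟨i, h⟩, rfl⟩
  · exact .inr ⟨⟨i - 2 * (m - 1), by omega⟩, Fin.ext (by simp [highBlock]; omega)⟩

theorem sum_sq_sub_vgen_of_tvec_eq (g : (Fin (2 * (m - 1)) → Bool) → ℤ × ℤ)
    {b b' : Fin (4 * m + 3) → Bool} (h : tvec m b = tvec m b') :
    ∑ i, (vgen m g b i - vgen m g b' i) ^ 2 =
      sqDist (g (b ∘ highBlock m)) (g (b' ∘ highBlock m)) +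
        sqDist (g (b ∘ lowBlock m)) (g (b' ∘ lowBlock m)) := by
  simp only [vgen, Fin.sum_univ_four, Matrix.cons_val_zero, Matrix.cons_val_one,
    Matrix.cons_val_two, Matrix.cons_val_three, Matrix.head_cons, Matrix.tail_cons, h,
    sq_sub_neg_one_pow_mul, sqDist, Function.comp_def, highBlock, lowBlock]
  ring

end Blocks

theorem same_cluster_case_general (m : ℕ)
    (g : (Fin (2 * (m - 1)) → Bool) → ℤ × ℤ)
    (hginj : Function.Injective g)
    (hgrange : Set.range g = Q (m - 1))
    (hggray : ∀ c c' : Fin (2 * (m - 1)) → Bool,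
      ((g c).1 - (g c').1) ^ 2 + ((g c).2 - (g c').2) ^ 2 = 4 →
      (Finset.univ.filter fun j => c j ≠ c' j).card = 1)
    (b b' : Fin (4 * m + 3) → Bool)
    (hdist : (∑ i : Fin 4, (vgen m g b i - vgen m g b' i) ^ 2) = 4)
    (hclust : tvec m b = tvec m b') :
    (∀ i : Fin (4 * m + 3), 4 * (m - 1) ≤ i.val → b i = b' i) ∧
    (Finset.univ.filter
      fun i : Fin (4 * m + 3) => i.val < 4 * (m - 1) ∧ b i ≠ b' i).card = 1 := by
  refine ⟨eq_of_tvec_eq hclust, ?_⟩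
  have hQ (c) : g c ∈ Q (m - 1) := hgrange ▸ Set.mem_range_self c
  rw [sum_sq_sub_vgen_of_tvec_eq m g hclust] at hdist
  rcases Q.sqDist_add_sqDist_eq_four (hQ _) (hQ _) hdist with ⟨hhigh, hlow⟩ | ⟨hhigh, hlow⟩
  · rw [card_filter_ne_eq_of_comp_eq (highBlock_injective m) (fun j => by simp [highBlock]; omega)
      (fun i hi => (lowBlock_or_highBlock m i hi).symm) (hginj hlow)]
    exact hggray _ _ hhigh
  · rw [card_filter_ne_eq_of_comp_eq (lowBlock_injective m) (fun j => by simp [lowBlock]; omega)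
      (lowBlock_or_highBlock m) (hginj hhigh)]
    exact hggray _ _ hlow

/-- if `v(b)` and `v(b')` are at squared Euclidean distance 4 and
their cluster labels coincide, then `b` and `b'` agree in the top 7 bits
`b_{k−7},…,b_{k−1}` and differ in exactly one of the remaining `4(m−1)` bits. -/
theorem same_cluster_case (m : ℕ) (hm : 2 ≤ m)
    (g : (Fin (2 * (m - 1)) → Bool) → ℤ × ℤ)
    (hginj : Function.Injective g)
    (hgrange : Set.range g = Q (m - 1))
    (hggray : ∀ c c' : Fin (2 * (m - 1)) → Bool,
      ((g c).1 - (g c').1) ^ 2 + ((g c).2 - (g c').2) ^ 2 = 4 →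
      (Finset.univ.filter fun j => c j ≠ c' j).card = 1)
    (b b' : Fin (4 * m + 3) → Bool)
    (hdist : (∑ i : Fin 4, (vgen m g b i - vgen m g b' i) ^ 2) = 4)
    (hclust : tvec m b = tvec m b') :
    (∀ i : Fin (4 * m + 3), 4 * (m - 1) ≤ i.val → b i = b' i) ∧
    (Finset.univ.filter
      fun i : Fin (4 * m + 3) => i.val < 4 * (m - 1) ∧ b i ≠ b' i).card = 1 :=
  same_cluster_case_general m g hginj hgrange hggray b b' hdist hclust
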